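/- arXiv:0907.3954 — 6 statements merged into one kernel-verified Lean document; each statement's English description precedes it below -/
import Mathlib

section
/- Let N ≥ 1 be an integer, 1 ≤ p < ∞, and define ψ₀(x) = max(min(2−2|x|,1),0). For c ∈ ℓ^p(ℤ) let Ψ_n^N c be the sequence (ψ₀((j−n)/N)·c(j))_{j∈ℤ}. Then ‖c‖_p ≤ ( Σ_{n ∈ Nℤ} ‖Ψ_n^N c‖_p^p )^{1/p} ≤ 2^{1/p} ‖c‖_p. -/
open MeasureTheory ENNReal Filter

noncomputable def lpNorm (p : ℝ≥0∞) (c : ℤ → ℂ) : ℝ≥0∞ :=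
  eLpNorm c p Measure.count

noncomputable def rowSup (a : ℤ → ℤ → ℂ) (k : ℤ) : ℝ≥0∞ :=
  ⨆ j : ℤ, (‖a j (j - k)‖₊ : ℝ≥0∞)

noncomputable def normC (a : ℤ → ℤ → ℂ) : ℝ≥0∞ := ∑' k : ℤ, rowSup a k

noncomputable def matMul (a : ℤ → ℤ → ℂ) (c : ℤ → ℂ) : ℤ → ℂ :=
  fun j => ∑' j' : ℤ, a j j' * c j'

noncomputable def trunc (a : ℤ → ℤ → ℂ) (s : ℕ) : ℤ → ℤ → ℂ :=
  fun i j => if |i - j| < (s : ℤ) then a i j else 0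

noncomputable def chiProj (y : ℤ) (N : ℕ) (c : ℤ → ℂ) : ℤ → ℂ :=
  fun j => if |j - y| < (N : ℤ) then c j else 0

noncomputable def psi0 (x : ℝ) : ℝ := max (min (2 - 2 * |x|) 1) 0

noncomputable def Psi (n : ℤ) (N : ℕ) (c : ℤ → ℂ) : ℤ → ℂ :=
  fun j => (psi0 (((j - n : ℤ) : ℝ) / (N : ℝ)) : ℂ) * c j

/-! Every `j ∈ ℤ` lies in the plateau `{ψ₀((· - Nm)/N) = 1}` of at least one cut-off and in the
support of at most two of them (those with `m = ⌊j/N⌋` and `m = ⌊j/N⌋ + 1`), and `0 ≤ ψ₀ ≤ 1`.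
Hence `1 ≤ ∑ₘ ψ₀((j - Nm)/N)^p ≤ 2` for every `j`; multiplying by `|c j|^p`, summing over `j` and
exchanging the two sums gives `‖c‖ₚ^p ≤ ∑ₘ ‖Ψ_{Nm}^N c‖ₚ^p ≤ 2 ‖c‖ₚ^p`. -/

lemma psi0_nonneg (x : ℝ) : 0 ≤ psi0 x := le_max_right _ _

lemma psi0_le_one (x : ℝ) : psi0 x ≤ 1 := max_le (min_le_right _ _) zero_le_one

lemma psi0_eq_one_of_abs_le {x : ℝ} (hx : |x| ≤ 1 / 2) : psi0 x = 1 := by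
  rw [psi0, min_eq_right (by linarith), max_eq_left zero_le_one]

lemma psi0_eq_zero_of_one_le_abs {x : ℝ} (hx : 1 ≤ |x|) : psi0 x = 0 :=
  max_eq_right ((min_le_left _ _).trans (by linarith))

lemma psi0_intCast_div_eq_one {N : ℕ} (hN : 0 < N) {k : ℤ} (hk : 2 * |k| ≤ N) :
    psi0 ((k : ℝ) / N) = 1 := by
  have hN' : (0 : ℝ) < N := by exact_mod_cast hN
  have hk' : 2 * |(k : ℝ)| ≤ N := by exact_mod_cast hk
  refine psi0_eq_one_of_abs_le ?_
  rw [abs_div, Nat.abs_cast, div_le_iff₀ hN']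
  linarith

lemma psi0_intCast_div_eq_zero {N : ℕ} (hN : 0 < N) {k : ℤ} (hk : N ≤ |k|) :
    psi0 ((k : ℝ) / N) = 0 := by
  have hN' : (0 : ℝ) < N := by exact_mod_cast hN
  have hk' : (N : ℝ) ≤ |(k : ℝ)| := by exact_mod_cast hk
  refine psi0_eq_zero_of_one_le_abs ?_
  rwa [abs_div, Nat.abs_cast, one_le_div hN']

lemma Int.exists_two_mul_abs_sub_mul_le {N : ℤ} (hN : 0 < N) (j : ℤ) :
    ∃ m, 2 * |j - N * m| ≤ N := by
  obtain ⟨hr0, hrN⟩ := And.intro (Int.emod_nonneg j hN.ne') (Int.emod_lt_of_pos j hN)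
  have hj := Int.mul_ediv_add_emod j N
  rcases le_or_gt (2 * (j % N)) N with h | h
  · refine ⟨j / N, ?_⟩
    rwa [show j - N * (j / N) = j % N by omega, abs_of_nonneg hr0]
  · refine ⟨j / N + 1, ?_⟩
    rw [show j - N * (j / N + 1) = j % N - N by rw [mul_add]; omega, abs_of_neg (by omega)]
    omega

lemma Int.eq_ediv_or_eq_ediv_add_one_of_abs_sub_mul_lt {N j m : ℤ} (hN : 0 < N)
    (h : |j - N * m| < N) : m = j / N ∨ m = j / N + 1 := by
  obtain ⟨hr0, hrN⟩ := And.intro (Int.emod_nonneg j hN.ne') (Int.emod_lt_of_pos j hN)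
  rw [abs_lt, ← Int.mul_ediv_add_emod j N] at h
  have hlo : N * (-2) < N * (j / N - m) := by linarith
  have hhi : N * (j / N - m) < N * 1 := by linarith
  have := lt_of_mul_lt_mul_left hlo hN.le
  have := lt_of_mul_lt_mul_left hhi hN.le
  omega

lemma one_le_tsum_enorm_psi0_rpow {N : ℕ} (hN : 0 < N) (q : ℝ) (j : ℤ) :
    1 ≤ ∑' m : ℤ, ‖(psi0 (((j - N * m : ℤ) : ℝ) / N) : ℂ)‖ₑ ^ q := by
  obtain ⟨m, hm⟩ := Int.exists_two_mul_abs_sub_mul_le (Int.natCast_pos.2 hN) j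
  calc (1 : ℝ≥0∞) = ‖(psi0 (((j - N * m : ℤ) : ℝ) / N) : ℂ)‖ₑ ^ q := by
        rw [psi0_intCast_div_eq_one hN hm]; simp
    _ ≤ _ := ENNReal.le_tsum m

lemma tsum_enorm_psi0_rpow_le_two {N : ℕ} (hN : 0 < N) {q : ℝ} (hq : 0 < q) (j : ℤ) :
    ∑' m : ℤ, ‖(psi0 (((j - N * m : ℤ) : ℝ) / N) : ℂ)‖ₑ ^ q ≤ 2 := by
  have hsupp : ∀ m ∉ ({j / N, j / N + 1} : Finset ℤ),
      ‖(psi0 (((j - N * m : ℤ) : ℝ) / N) : ℂ)‖ₑ ^ q = 0 := by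
    intro m hm
    have hfar : (N : ℤ) ≤ |j - N * m| := by
      by_contra! h
      rcases Int.eq_ediv_or_eq_ediv_add_one_of_abs_sub_mul_lt (by omega) h with rfl | rfl <;>
        simp at hm
    rw [psi0_intCast_div_eq_zero hN hfar]
    simp [ENNReal.zero_rpow_of_pos hq]
  have hle_one (m : ℤ) : ‖(psi0 (((j - N * m : ℤ) : ℝ) / N) : ℂ)‖ₑ ^ q ≤ 1 := by
    refine ENNReal.rpow_le_one ?_ hq.le
    rw [← ofReal_norm, Complex.norm_real, Real.norm_of_nonneg (psi0_nonneg _)]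
    exact ofReal_le_one.2 (psi0_le_one _)
  calc ∑' m : ℤ, ‖(psi0 (((j - N * m : ℤ) : ℝ) / N) : ℂ)‖ₑ ^ q
      = ∑ m ∈ {j / N, j / N + 1}, ‖(psi0 (((j - N * m : ℤ) : ℝ) / N) : ℂ)‖ₑ ^ q :=
        tsum_eq_sum hsupp
    _ ≤ ∑ _m ∈ ({j / N, j / N + 1} : Finset ℤ), 1 := Finset.sum_le_sum fun m _ => hle_one m
    _ ≤ 2 := by
        rw [Finset.sum_const, nsmul_one]
        exact_mod_cast Finset.card_le_two

lemma tsum_tsum_enorm_mul_rpow {ι α R : Type*} [SeminormedAddCommGroup R] [Mul R]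
    [NormMulClass R] (φ : ι → α → R) (c : α → R) {q : ℝ} (hq : 0 ≤ q) :
    ∑' i, ∑' a, ‖φ i a * c a‖ₑ ^ q = ∑' a, (∑' i, ‖φ i a‖ₑ ^ q) * ‖c a‖ₑ ^ q := by
  simp_rw [enorm_mul, ENNReal.mul_rpow_of_nonneg _ _ hq, ← ENNReal.tsum_mul_right]
  exact ENNReal.tsum_comm

lemma lpNorm_rpow_toReal {p : ℝ≥0∞} (hp₀ : p ≠ 0) (hp : p ≠ ⊤) (c : ℤ → ℂ) :
    lpNorm p c ^ p.toReal = ∑' j, ‖c j‖ₑ ^ p.toReal := by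
  rw [_root_.lpNorm, eLpNorm_eq_lintegral_rpow_enorm_toReal hp₀ hp, lintegral_count, one_div,
    ENNReal.rpow_inv_rpow (ENNReal.toReal_pos hp₀ hp).ne']

lemma tsum_lpNorm_Psi_rpow {p : ℝ≥0∞} (hp₀ : p ≠ 0) (hp : p ≠ ⊤) (N : ℕ) (c : ℤ → ℂ) :
    ∑' m : ℤ, lpNorm p (Psi (N * m) N c) ^ p.toReal =
      ∑' j, (∑' m : ℤ, ‖(psi0 (((j - N * m : ℤ) : ℝ) / N) : ℂ)‖ₑ ^ p.toReal) *
        ‖c j‖ₑ ^ p.toReal := by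
  simp_rw [lpNorm_rpow_toReal hp₀ hp]
  exact tsum_tsum_enorm_mul_rpow (fun m j ↦ (psi0 (((j - N * m : ℤ) : ℝ) / N) : ℂ)) c
    ENNReal.toReal_nonneg

theorem stmt6_general (p : ℝ≥0∞) (hp : 1 ≤ p) (hp' : p ≠ ⊤) (N : ℕ) (hN : 1 ≤ N)
    (c : ℤ → ℂ) :
    lpNorm p c ≤ (∑' m : ℤ, (lpNorm p (Psi ((N : ℤ) * m) N c)) ^ p.toReal) ^ (1 / p.toReal) ∧
    (∑' m : ℤ, (lpNorm p (Psi ((N : ℤ) * m) N c)) ^ p.toReal) ^ (1 / p.toReal) ≤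
      (2 : ℝ≥0∞) ^ (1 / p.toReal) * lpNorm p c := by
  have hp₀ : p ≠ 0 := (zero_lt_one.trans_le hp).ne'
  have hq : 0 < p.toReal := ENNReal.toReal_pos hp₀ hp'
  have hlower : lpNorm p c ^ p.toReal ≤ ∑' m : ℤ, lpNorm p (Psi (N * m) N c) ^ p.toReal := by
    rw [lpNorm_rpow_toReal hp₀ hp', tsum_lpNorm_Psi_rpow hp₀ hp']
    exact ENNReal.tsum_le_tsum fun j ↦
      le_mul_of_one_le_left zero_le (one_le_tsum_enorm_psi0_rpow hN _ j)
  have hupper : ∑' m : ℤ, lpNorm p (Psi (N * m) N c) ^ p.toReal ≤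
      2 * lpNorm p c ^ p.toReal := by
    rw [lpNorm_rpow_toReal hp₀ hp', tsum_lpNorm_Psi_rpow hp₀ hp', ← ENNReal.tsum_mul_left]
    exact ENNReal.tsum_le_tsum fun j ↦ mul_le_mul_left (tsum_enorm_psi0_rpow_le_two hN hq j) _
  refine ⟨by rwa [one_div, ENNReal.le_rpow_inv_iff hq], ?_⟩
  calc (∑' m : ℤ, lpNorm p (Psi (N * m) N c) ^ p.toReal) ^ (1 / p.toReal)
      ≤ (2 * lpNorm p c ^ p.toReal) ^ (1 / p.toReal) := by gcongr
    _ = 2 ^ (1 / p.toReal) * lpNorm p c := by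
        rw [ENNReal.mul_rpow_of_nonneg _ _ (by positivity), one_div,
          ENNReal.rpow_rpow_inv hq.ne']

theorem stmt6 (p : ℝ≥0∞) (hp : 1 ≤ p) (hp' : p ≠ ⊤) (N : ℕ) (hN : 1 ≤ N)
    (c : ℤ → ℂ) (hc : lpNorm p c < ⊤) :
    lpNorm p c ≤ (∑' m : ℤ, (lpNorm p (Psi ((N : ℤ) * m) N c)) ^ p.toReal) ^ (1 / p.toReal) ∧
    (∑' m : ℤ, (lpNorm p (Psi ((N : ℤ) * m) N c)) ^ p.toReal) ^ (1 / p.toReal) ≤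
      (2 : ℝ≥0∞) ^ (1 / p.toReal) * lpNorm p c :=
  stmt6_general p hp hp' N hN c
end

section
/- Let N ≥ 1, A ∈ C with truncation A_N, and Ψ_n^N the multiplication operator by ψ₀((·−n)/N) where ψ₀(x)=max(min(2−2|x|,1),0) and n ∈ Nℤ. Then the commutator satisfies ‖Ψ_n^N A_N − A_N Ψ_n^N‖_C ≤ inf_{0 ≤ s ≤ N} ( ‖A_N − A_s‖_C + (2s/N)‖A_s‖_C ). -/
open MeasureTheory ENNReal Filter

/-!
Write the commutator entrywise as `(ψ i - ψ j) a(i,j)` with `ψ i = ψ₀((i - n)/N)` and split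
`A_N = (A_N - A_s) + A_s`. Since `ψ` takes values in `[0, 1]`, the first part is bounded by
`‖A_N - A_s‖_C`; on the band `|i - j| < s` carrying `A_s`, the Lipschitz constant `2` of `ψ₀`
gives `|ψ i - ψ j| ≤ 2s/N`.
-/

lemma psi0_mem_Icc (x : ℝ) : psi0 x ∈ Set.Icc (0 : ℝ) 1 :=
  ⟨le_max_right _ _, max_le (min_le_right _ _) zero_le_one⟩

lemma abs_psi0_sub_psi0_le_one (x y : ℝ) : |psi0 x - psi0 y| ≤ 1 := by
  have hx := psi0_mem_Icc x
  have hy := psi0_mem_Icc y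
  rw [abs_le]
  constructor <;> linarith [hx.1, hx.2, hy.1, hy.2]

lemma abs_psi0_sub_psi0_le (x y : ℝ) : |psi0 x - psi0 y| ≤ 2 * |x - y| :=
  calc |psi0 x - psi0 y| ≤ |min (2 - 2 * |x|) 1 - min (2 - 2 * |y|) 1| :=
        abs_max_sub_max_le_abs _ _ _
    _ ≤ |(2 - 2 * |x|) - (2 - 2 * |y|)| := by
        simpa using abs_min_sub_min_le_max (2 - 2 * |x|) 1 (2 - 2 * |y|) 1
    _ = 2 * |(|x| - |y|)| := by
        rw [show (2 - 2 * |x|) - (2 - 2 * |y|) = -2 * (|x| - |y|) by ring, abs_mul]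
        norm_num
    _ ≤ 2 * |x - y| := by linarith [abs_abs_sub_abs_le_abs_sub x y]

lemma normC_add_le (f g : ℤ → ℤ → ℂ) :
    normC (fun i j => f i j + g i j) ≤ normC f + normC g := by
  rw [normC, normC, normC, ← ENNReal.tsum_add]
  refine ENNReal.tsum_le_tsum fun k => iSup_le fun j => ?_
  calc (‖f j (j - k) + g j (j - k)‖₊ : ℝ≥0∞) ≤ ‖f j (j - k)‖₊ + ‖g j (j - k)‖₊ := by
        exact_mod_cast nnnorm_add_le _ _
    _ ≤ rowSup f k + rowSup g k :=
        add_le_add (le_iSup (fun j => (‖f j (j - k)‖₊ : ℝ≥0∞)) j)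
          (le_iSup (fun j => (‖g j (j - k)‖₊ : ℝ≥0∞)) j)

lemma normC_le_mul_of_le (f g : ℤ → ℤ → ℂ) (c : ℝ≥0∞)
    (h : ∀ i j, ‖f i j‖ₑ ≤ c * ‖g i j‖ₑ) : normC f ≤ c * normC g := by
  rw [normC, normC, ← ENNReal.tsum_mul_left]
  refine ENNReal.tsum_le_tsum fun k => iSup_le fun j => ?_
  exact (h j (j - k)).trans
    (mul_le_mul_right (le_iSup (fun j => (‖g j (j - k)‖₊ : ℝ≥0∞)) j) c)

lemma normC_commutator_le (ψ : ℤ → ℂ) (b c : ℤ → ℤ → ℂ) (s : ℕ) (ε : ℝ≥0∞)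
    (hψ : ∀ i j, ‖ψ i - ψ j‖ₑ ≤ 1) (hψε : ∀ i j, |i - j| < (s : ℤ) → ‖ψ i - ψ j‖ₑ ≤ ε)
    (hc : ∀ i j, ¬ |i - j| < (s : ℤ) → c i j = 0) :
    normC (fun i j => ψ i * b i j - b i j * ψ j) ≤
      normC (fun i j => b i j - c i j) + ε * normC c := by
  have hsplit : (fun i j => ψ i * b i j - b i j * ψ j) =
      fun i j => (ψ i - ψ j) * (b i j - c i j) + (ψ i - ψ j) * c i j := by
    funext i j; ring
  rw [hsplit]
  refine (normC_add_le _ _).trans (add_le_add ?_ (normC_le_mul_of_le _ _ _ fun i j => ?_))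
  · refine (normC_le_mul_of_le _ _ 1 fun i j => ?_).trans_eq (one_mul _)
    rw [enorm_mul]
    exact mul_le_mul_left (hψ i j) _
  · by_cases hij : |i - j| < (s : ℤ)
    · rw [enorm_mul]
      exact mul_le_mul_left (hψε i j hij) _
    · simp [hc i j hij]

lemma enorm_psi0_sub_psi0_le (N : ℕ) (hN : 1 ≤ N) (n i j : ℤ) (s : ℕ) (hij : |i - j| < (s : ℤ)) :
    ‖(psi0 (((i - n : ℤ) : ℝ) / N) : ℂ) - psi0 (((j - n : ℤ) : ℝ) / N)‖ₑ ≤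
      (2 * s : ℝ≥0∞) / N := by
  have hN : (0 : ℝ) < N := by exact_mod_cast hN
  have hdist : |(((i - n : ℤ) : ℝ) / N) - ((j - n : ℤ) : ℝ) / N| ≤ s / N := by
    rw [show (((i - n : ℤ) : ℝ) / N) - ((j - n : ℤ) : ℝ) / N = ((i - j : ℤ) : ℝ) / N by
      push_cast; ring, abs_div, Nat.abs_cast, ← Int.cast_abs]
    gcongr
    exact_mod_cast hij.le
  rw [← Complex.ofReal_sub, ← ofReal_norm, Complex.norm_real, Real.norm_eq_abs]
  calc ENNReal.ofReal |psi0 _ - psi0 _| ≤ ENNReal.ofReal (2 * s / N) := by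
        gcongr
        rw [mul_div_assoc]
        exact (abs_psi0_sub_psi0_le _ _).trans (by gcongr)
    _ = (2 * s : ℝ≥0∞) / N := by
        rw [ENNReal.ofReal_div_of_pos hN, ENNReal.ofReal_mul (by norm_num)]
        simp

lemma enorm_psi0_sub_psi0_le_one (x y : ℝ) : ‖(psi0 x : ℂ) - psi0 y‖ₑ ≤ 1 := by
  rw [← Complex.ofReal_sub, ← ofReal_norm, Complex.norm_real, Real.norm_eq_abs,
    ← ENNReal.ofReal_one]
  exact ENNReal.ofReal_le_ofReal (abs_psi0_sub_psi0_le_one x y)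

theorem stmt10_general (N : ℕ) (hN : 1 ≤ N) (a : ℤ → ℤ → ℂ) (m : ℤ) :
    normC (fun i j =>
        (psi0 (((i - (N : ℤ) * m : ℤ) : ℝ) / (N : ℝ)) : ℂ) * trunc a N i j -
          trunc a N i j * (psi0 (((j - (N : ℤ) * m : ℤ) : ℝ) / (N : ℝ)) : ℂ)) ≤
      ⨅ (s : ℕ) (_ : s ≤ N),
        (normC (fun i j => trunc a N i j - trunc a s i j) +
          ((2 * s : ℝ≥0∞) / (N : ℝ≥0∞)) * normC (trunc a s)) := by
  refine le_iInf₂ fun s _ => ?_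
  exact normC_commutator_le (fun i => psi0 (((i - (N : ℤ) * m : ℤ) : ℝ) / N)) _ _ s _
    (fun i j => enorm_psi0_sub_psi0_le_one _ _)
    (fun i j hij => enorm_psi0_sub_psi0_le N hN _ i j s hij)
    (fun i j hij => if_neg hij)

theorem stmt10 (N : ℕ) (hN : 1 ≤ N) (a : ℤ → ℤ → ℂ) (hA : normC a < ⊤) (m : ℤ) :
    normC (fun i j =>
        (psi0 (((i - (N : ℤ) * m : ℤ) : ℝ) / (N : ℝ)) : ℂ) * trunc a N i j -
          trunc a N i j * (psi0 (((j - (N : ℤ) * m : ℤ) : ℝ) / (N : ℝ)) : ℂ)) ≤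
      ⨅ (s : ℕ) (_ : s ≤ N),
        (normC (fun i j => trunc a N i j - trunc a s i j) +
          ((2 * s : ℝ≥0∞) / (N : ℝ≥0∞)) * normC (trunc a s)) :=
  stmt10_general N hN a m
end

section
/- Let 1 ≤ p ≤ ∞ and A ∈ C. If A has ℓ^p-stability, i.e., there exist C₁, C₂ > 0 with C₁‖c‖_p ≤ ‖Ac‖_p ≤ C₂‖c‖_p for all c ∈ ℓ^p(ℤ), then there exist a constant C₀ > 0 and a positive integer N₀ such that for all integers N ≥ N₀ and all n ∈ Nℤ, ‖χ_n^{2N} A χ_n^N c‖_p ≥ C₀ ‖χ_n^N c‖_p for all c ∈ ℓ^p(ℤ). -/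
/-!
A is bounded below on ℓ^p by C₁, so it suffices to see that the part of A χ_n^N c lying outside
the window of radius 2N is at most (C₁/2)‖χ_n^N c‖_p once N is large. An entry a(j, j') linking
|j' - n| < N to |j - n| ≥ 2N has |j - j'| > N, so that part is computed by the off-band matrix
A_M, keeping only the entries with |j - j'| ≥ M, for any M ≤ N. By Young's inequality
‖A_M c‖_p ≤ ‖A_M‖_C ‖c‖_p, and ‖A_M‖_C = Σ_{|k| ≥ M} sup_j |a(j, j - k)| is the tail of the
convergent series ‖A‖_C, hence at most C₁/2 for M large.
-/

open MeasureTheory ENNReal Filter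

theorem eLpNorm_tsum_le {α ι : Type*} [MeasurableSpace α] {μ : Measure α} [Countable ι]
    {p : ℝ≥0∞} (hp : 1 ≤ p) {g : ι → α → ℝ≥0∞} (hg : ∀ i, AEMeasurable (g i) μ) :
    eLpNorm (fun x ↦ ∑' i, g i x) p μ ≤ ∑' i, eLpNorm (g i) p μ := by
  rcases eq_or_ne p ∞ with rfl | hp_top
  · rw [eLpNorm_exponent_top]
    refine eLpNormEssSup_le_of_ae_enorm_bound ?_
    filter_upwards [ae_all_iff.2 fun i ↦ ae_le_eLpNormEssSup (f := g i) (μ := μ)] with x hx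
    simpa only [enorm_eq_self, eLpNorm_exponent_top] using ENNReal.tsum_le_tsum hx
  have hp0 : p ≠ 0 := (zero_lt_one.trans_le hp).ne'
  have hr : 0 < p.toReal := ENNReal.toReal_pos hp0 hp_top
  set F : Finset ι → α → ℝ≥0∞ := fun s x ↦ ∑ i ∈ s, g i x
  have hF : ∀ s, eLpNorm (F s) p μ ≤ ∑' i, eLpNorm (g i) p μ := fun s ↦
    calc eLpNorm (F s) p μ = eLpNorm (∑ i ∈ s, g i) p μ := by
          congr 1; ext x; simp [F]
      _ ≤ ∑ i ∈ s, eLpNorm (g i) p μ :=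
          eLpNorm_sum_le (fun i _ ↦ (hg i).aestronglyMeasurable) hp
      _ ≤ ∑' i, eLpNorm (g i) p μ := ENNReal.sum_le_tsum s
  have hpow_sup : ∀ r : ℝ, 0 < r → ∀ f : Finset ι → ℝ≥0∞, (⨆ s, f s) ^ r = ⨆ s, f s ^ r :=
    fun r hr f ↦ (ENNReal.orderIsoRpow r hr).map_iSup f
  have hsup : eLpNorm (fun x ↦ ∑' i, g i x) p μ = ⨆ s, eLpNorm (F s) p μ := by
    have hmono : Directed (· ≤ ·) fun s x ↦ F s x ^ p.toReal :=
      Monotone.directed_le fun s t hst x ↦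
        ENNReal.rpow_le_rpow (Finset.sum_le_sum_of_subset hst) hr.le
    simp only [eLpNorm_eq_lintegral_rpow_enorm_toReal hp0 hp_top, enorm_eq_self,
      ENNReal.tsum_eq_iSup_sum]
    simp only [hpow_sup _ hr]
    rw [lintegral_iSup_directed (fun s ↦ ?_) hmono, hpow_sup _ (one_div_pos.2 hr)]
    exact (Finset.aemeasurable_fun_sum _ fun i _ ↦ hg i).pow_const _
  exact hsup ▸ iSup_le hF

theorem measurePreserving_count_equiv {α β : Type*} [MeasurableSpace α] [MeasurableSpace β]
    [DiscreteMeasurableSpace α] [DiscreteMeasurableSpace β] (e : α ≃ β) :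
    MeasurePreserving e Measure.count Measure.count := by
  refine ⟨.of_discrete, Measure.ext fun s hs ↦ ?_⟩
  rw [Measure.map_apply .of_discrete hs, ← Measure.count_injective_image' e.injective
    (.of_discrete) (.of_discrete), e.image_preimage]

theorem eLpNorm_count_le_tsum_mul_of_le_conv {α E F : Type*} [AddGroup α] [Countable α] [MeasurableSpace α]
    [DiscreteMeasurableSpace α] [NormedAddCommGroup E] [NormedAddCommGroup F] {p : ℝ≥0∞}
    (hp : 1 ≤ p) {f : α → E} {u : α → F} (b : α → ℝ≥0∞)
    (h : ∀ j, ‖f j‖ₑ ≤ ∑' k, b k * ‖u (j - k)‖ₑ) :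
    eLpNorm f p Measure.count ≤ (∑' k, b k) * eLpNorm u p Measure.count :=
  calc eLpNorm f p Measure.count
      ≤ eLpNorm (fun j ↦ ∑' k, b k * ‖u (j - k)‖ₑ) p Measure.count :=
        eLpNorm_mono_enorm fun j ↦ by simpa only [enorm_eq_self] using h j
    _ ≤ ∑' k, eLpNorm (fun j ↦ b k * ‖u (j - k)‖ₑ) p Measure.count :=
        eLpNorm_tsum_le hp fun k ↦ .of_discrete
    _ ≤ ∑' k, b k * eLpNorm u p Measure.count := by
        refine ENNReal.tsum_le_tsum fun k ↦ ?_
        calc eLpNorm (fun j ↦ b k * ‖u (j - k)‖ₑ) p Measure.count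
            ≤ b k * eLpNorm (u ∘ Equiv.subRight k) p Measure.count :=
              eLpNorm_le_mul_eLpNorm_of_ae_le_mul'' p .of_discrete (ae_of_all _ fun j ↦ by simp)
          _ = b k * eLpNorm u p Measure.count := by
              rw [eLpNorm_comp_measurePreserving .of_discrete
                (measurePreserving_count_equiv (Equiv.subRight k))]
    _ = (∑' k, b k) * eLpNorm u p Measure.count := ENNReal.tsum_mul_right

theorem eLpNorm_count_lt_top_of_finite_support {α E : Type*} [Countable α] [MeasurableSpace α]
    [DiscreteMeasurableSpace α] [NormedAddCommGroup E] {f : α → E} (hf : f.support.Finite)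
    (p : ℝ≥0∞) : eLpNorm f p Measure.count < ∞ := by
  have : IsFiniteMeasure (Measure.count.restrict f.support) :=
    isFiniteMeasure_restrict.2 (Measure.count_apply_lt_top.2 hf).ne
  have hbound : ∀ x, ‖f x‖ ≤ ∑ y ∈ hf.toFinset, ‖f y‖ := fun x ↦ by
    by_cases hx : f x = 0
    · simpa [hx] using Finset.sum_nonneg fun y _ ↦ norm_nonneg (f y)
    · exact Finset.single_le_sum (fun y _ ↦ norm_nonneg (f y)) (hf.mem_toFinset.2 hx)
  rw [← eLpNorm_restrict_eq_of_support_subset subset_rfl]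
  exact (MemLp.of_bound .of_discrete _ (ae_of_all _ hbound)).eLpNorm_lt_top

theorem enorm_matMul_le (a : ℤ → ℤ → ℂ) (c : ℤ → ℂ) (j : ℤ) :
    ‖matMul a c j‖ₑ ≤ ∑' k, rowSup a k * ‖c (j - k)‖ₑ :=
  calc ‖matMul a c j‖ₑ ≤ ∑' j', ‖a j j' * c j'‖ₑ := enorm_tsum_le_tsum_enorm
    _ = ∑' k, ‖a j (j - k)‖ₑ * ‖c (j - k)‖ₑ := by
        rw [← (Equiv.subLeft j).tsum_eq]; simp [enorm_mul]
    _ ≤ ∑' k, rowSup a k * ‖c (j - k)‖ₑ := by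
        refine ENNReal.tsum_le_tsum fun k ↦ mul_le_mul_left ?_ _
        exact le_iSup (fun i ↦ (‖a i (i - k)‖₊ : ℝ≥0∞)) j

theorem lpNorm_matMul_le {p : ℝ≥0∞} (hp : 1 ≤ p) (a : ℤ → ℤ → ℂ) (c : ℤ → ℂ) :
    lpNorm p (matMul a c) ≤ normC a * lpNorm p c :=
  eLpNorm_count_le_tsum_mul_of_le_conv hp _ (enorm_matMul_le a c)

def offBand (a : ℤ → ℤ → ℂ) (M : ℕ) : ℤ → ℤ → ℂ :=
  fun i j ↦ if (M : ℤ) ≤ |i - j| then a i j else 0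

theorem rowSup_offBand (a : ℤ → ℤ → ℂ) (M : ℕ) (k : ℤ) :
    rowSup (offBand a M) k = if (M : ℤ) ≤ |k| then rowSup a k else 0 := by
  split_ifs with hk <;> simp [rowSup, offBand, hk]

theorem exists_normC_offBand_le {a : ℤ → ℤ → ℂ} (hA : normC a < ∞) {ε : ℝ≥0∞} (hε : ε ≠ 0) :
    ∃ M : ℕ, 0 < M ∧ normC (offBand a M) ≤ ε := by
  obtain ⟨s, hs⟩ := (((tendsto_order.1 (ENNReal.tendsto_tsum_compl_atTop_zero hA.ne)).2 ε
    (pos_iff_ne_zero.2 hε)).and (eventually_ge_atTop ∅)).exists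
  refine ⟨s.sup Int.natAbs + 1, Nat.succ_pos _, ?_⟩
  calc normC (offBand a _) ≤ ∑' k, (↑s : Set ℤ)ᶜ.indicator (rowSup a) k := by
        refine ENNReal.tsum_le_tsum fun k ↦ ?_
        rw [rowSup_offBand]
        split_ifs with hk
        · have : k ∉ s := fun hks ↦ by
            have := Finset.le_sup (f := Int.natAbs) hks
            rw [Int.abs_eq_natAbs] at hk; omega
          simp [this]
        · exact bot_le
    _ = ∑' k : {k // k ∉ s}, rowSup a k := (tsum_subtype _ _).symm
    _ ≤ ε := hs.1.le

theorem matMul_chiProj_eq_offBand {a : ℤ → ℤ → ℂ} {M N : ℕ} (hMN : M ≤ N) (y : ℤ) (c : ℤ → ℂ)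
    {j : ℤ} (hj : 2 * (N : ℤ) ≤ |j - y|) :
    matMul a (chiProj y N c) j = matMul (offBand a M) (chiProj y N c) j := by
  refine tsum_congr fun j' ↦ ?_
  by_cases h : |j' - y| < N
  · have hfar : (M : ℤ) ≤ |j - j'| := by
      rw [abs_lt] at h; rw [le_abs'] at hj ⊢; omega
    simp [offBand, hfar]
  · simp [chiProj, h]

theorem finite_support_chiProj (y : ℤ) (N : ℕ) (c : ℤ → ℂ) : (chiProj y N c).support.Finite :=
  (Set.finite_Ioo (y - N) (y + N)).subset fun j hj ↦ by
    by_cases h : |j - y| < N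
    · rw [abs_lt] at h; exact ⟨by omega, by omega⟩
    · exact absurd (by simp [chiProj, h]) hj

theorem lpNorm_matMul_chiProj_le {p : ℝ≥0∞} (hp : 1 ≤ p) (a : ℤ → ℤ → ℂ) {M N : ℕ} (hMN : M ≤ N)
    (y : ℤ) (c : ℤ → ℂ) :
    lpNorm p (matMul a (chiProj y N c)) ≤ lpNorm p (chiProj y (2 * N) (matMul a (chiProj y N c)))
      + normC (offBand a M) * lpNorm p (chiProj y N c) := by
  set u := chiProj y N c
  set v := matMul a u
  have hfar : ∀ j, ‖(v - chiProj y (2 * N) v) j‖ₑ ≤ ‖matMul (offBand a M) u j‖ₑ := fun j ↦ by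
    by_cases hj : |j - y| < ((2 * N : ℕ) : ℤ)
    · rw [Pi.sub_apply, chiProj, if_pos hj, sub_self, enorm_zero]
      exact bot_le
    · rw [Pi.sub_apply, chiProj, if_neg hj, sub_zero]
      exact (congrArg _ (matMul_chiProj_eq_offBand hMN y c (by push_cast at hj; omega))).le
  calc lpNorm p v = lpNorm p (chiProj y (2 * N) v + (v - chiProj y (2 * N) v)) := by
        rw [add_sub_cancel]
    _ ≤ lpNorm p (chiProj y (2 * N) v) + lpNorm p (v - chiProj y (2 * N) v) :=
        eLpNorm_add_le .of_discrete .of_discrete hp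
    _ ≤ lpNorm p (chiProj y (2 * N) v) + lpNorm p (matMul (offBand a M) u) := by
        gcongr; exact eLpNorm_mono_enorm hfar
    _ ≤ lpNorm p (chiProj y (2 * N) v) + normC (offBand a M) * lpNorm p u := by
        gcongr; exact lpNorm_matMul_le hp _ _

theorem stmt11 (p : ℝ≥0∞) (hp : 1 ≤ p) (a : ℤ → ℤ → ℂ) (hA : normC a < ⊤)
    (hstab : ∃ C₁ C₂ : ℝ≥0∞, C₁ ≠ 0 ∧ C₂ ≠ ⊤ ∧ ∀ c : ℤ → ℂ, lpNorm p c < ⊤ →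
      C₁ * lpNorm p c ≤ lpNorm p (matMul a c) ∧
        lpNorm p (matMul a c) ≤ C₂ * lpNorm p c) :
    ∃ C₀ : ℝ≥0∞, C₀ ≠ 0 ∧ ∃ N₀ : ℕ, 0 < N₀ ∧ ∀ N : ℕ, N₀ ≤ N → ∀ m : ℤ, ∀ c : ℤ → ℂ,
      C₀ * lpNorm p (chiProj ((N : ℤ) * m) N c) ≤
        lpNorm p (chiProj ((N : ℤ) * m) (2 * N) (matMul a (chiProj ((N : ℤ) * m) N c))) := by
  obtain ⟨C₁, _, hC₁, _, hst⟩ := hstab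
  -- `min C₁ 1` keeps the constant finite, as it is cancelled below.
  set D := min C₁ 1
  have hD : D / 2 ≠ 0 := (ENNReal.half_pos (lt_min (pos_iff_ne_zero.2 hC₁) one_pos).ne').ne'
  have hD_top : D / 2 ≠ ∞ := ENNReal.div_ne_top (ne_top_of_le_ne_top one_ne_top (min_le_right _ _))
    two_ne_zero
  obtain ⟨M, hM, hoff⟩ := exists_normC_offBand_le hA hD
  refine ⟨D / 2, hD, M, hM, fun N hN m c ↦ ?_⟩
  set u := chiProj (N * m) N c
  have hu : lpNorm p u < ∞ := eLpNorm_count_lt_top_of_finite_support (finite_support_chiProj ..) p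
  refine ENNReal.le_of_add_le_add_right (ENNReal.mul_ne_top hD_top hu.ne) ?_
  calc D / 2 * lpNorm p u + D / 2 * lpNorm p u = D * lpNorm p u := by
        rw [← add_mul, ENNReal.add_halves]
    _ ≤ C₁ * lpNorm p u := by gcongr; exact min_le_left _ _
    _ ≤ lpNorm p (matMul a u) := (hst u hu).1
    _ ≤ _ := (lpNorm_matMul_chiProj_le hp a hN _ c).trans (by gcongr)
end

section
/- Let 1 ≤ p ≤ ∞ and A ∈ C. Suppose there exist C₀ > 0 and a positive integer N₀ such that ‖χ_n^{2N} A χ_n^N c‖_p ≥ C₀‖χ_n^N c‖_p for all c ∈ ℓ^p(ℤ), all integers N ≥ N₀, and all n ∈ Nℤ. Then there exist a positive integer N₁ and a constant α > 2(5+2^{1−p})^{1/p} · inf_{0 ≤ s ≤ N₁}( ‖A−A_s‖_C + (s/N₁)‖A‖_C ) such that ‖χ_n^{2N₁} A χ_n^{N₁} c‖_p ≥ α‖χ_n^{N₁} c‖_p for all c ∈ ℓ^p(ℤ) and all n ∈ N₁ℤ. -/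
open MeasureTheory ENNReal Filter

/-! One can take `α = C₀`, the constant of the hypothesis: the truncation error `‖A - A_s‖_C` is a
tail of the convergent series defining `‖A‖_C`, and `(s/N)‖A‖_C → 0` for fixed `s`, so the infimum
tends to `0` and is eventually below `C₀` divided by the finite constant in front of it. -/

open Topology

lemma rowSup_sub_trunc (a : ℤ → ℤ → ℂ) (s : ℕ) (k : ℤ) :
    rowSup (fun i j => a i j - trunc a s i j) k = if |k| < (s : ℤ) then 0 else rowSup a k := by
  unfold rowSup trunc
  split_ifs with h <;> simp [h]

lemma normC_sub_trunc (a : ℤ → ℤ → ℂ) (s : ℕ) :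
    normC (fun i j => a i j - trunc a s i j) =
      ∑' k : {k // k ∉ Finset.Ioo (-(s : ℤ)) s}, rowSup a k := by
  refine Eq.trans ?_ (tsum_subtype {k : ℤ | k ∉ Finset.Ioo (-(s : ℤ)) s} (rowSup a)).symm
  unfold normC
  congr 1 with k
  simp only [rowSup_sub_trunc, Set.indicator, abs_lt, Set.mem_ofPred_eq, Finset.mem_Ioo]
  split_ifs <;> tauto

lemma tendsto_normC_sub_trunc {a : ℤ → ℤ → ℂ} (ha : normC a ≠ ⊤) :
    Tendsto (fun s : ℕ => normC (fun i j => a i j - trunc a s i j)) atTop (𝓝 0) := by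
  simp only [normC_sub_trunc]
  exact (ENNReal.tendsto_tsum_compl_atTop_zero ha).comp Finset.tendsto_Ioo_neg

lemma tendsto_iInf_add_div_mul {g : ℕ → ℝ≥0∞} (hg : Tendsto g atTop (𝓝 0)) {c : ℝ≥0∞}
    (hc : c ≠ ⊤) :
    Tendsto (fun N : ℕ => ⨅ (s : ℕ) (_ : s ≤ N), (g s + ((s : ℝ≥0∞) / (N : ℝ≥0∞)) * c))
      atTop (𝓝 0) := by
  refine ENNReal.tendsto_nhds_zero.2 fun ε hε => ?_
  have hε2 : 0 < ε / 2 := ENNReal.half_pos hε.ne'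
  obtain ⟨s, hs⟩ := (hg.eventually_le_const hε2).exists
  have hdecay : Tendsto (fun N : ℕ => (s * c : ℝ≥0∞) * (N : ℝ≥0∞)⁻¹) atTop (𝓝 0) := by
    simpa using ENNReal.Tendsto.const_mul ENNReal.tendsto_inv_nat_nhds_zero
      (Or.inr (ENNReal.mul_ne_top (ENNReal.natCast_ne_top s) hc))
  filter_upwards [eventually_ge_atTop s, hdecay.eventually_le_const hε2] with N hsN hN
  calc ⨅ (s : ℕ) (_ : s ≤ N), (g s + ((s : ℝ≥0∞) / (N : ℝ≥0∞)) * c)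
      ≤ g s + ((s : ℝ≥0∞) / (N : ℝ≥0∞)) * c := biInf_le _ hsN
    _ ≤ ε / 2 + ε / 2 := by
        gcongr
        rwa [div_eq_mul_inv, mul_right_comm]
    _ = ε := ENNReal.add_halves ε

theorem stmt12_general (p : ℝ≥0∞) (a : ℤ → ℤ → ℂ) (hA : normC a < ⊤)
    (hyp : ∃ C₀ : ℝ≥0∞, C₀ ≠ 0 ∧ ∃ N₀ : ℕ, 0 < N₀ ∧ ∀ N : ℕ, N₀ ≤ N → ∀ m : ℤ, ∀ c : ℤ → ℂ,
      C₀ * lpNorm p (chiProj ((N : ℤ) * m) N c) ≤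
        lpNorm p (chiProj ((N : ℤ) * m) (2 * N) (matMul a (chiProj ((N : ℤ) * m) N c)))) :
    ∃ N₁ : ℕ, 0 < N₁ ∧ ∃ α : ℝ≥0∞,
      2 * ((5 : ℝ≥0∞) + (2 : ℝ≥0∞) ^ (1 - p.toReal)) ^ (1 / p.toReal) *
          (⨅ (s : ℕ) (_ : s ≤ N₁),
            (normC (fun i j => a i j - trunc a s i j) + ((s : ℝ≥0∞) / (N₁ : ℝ≥0∞)) * normC a)) < α ∧
      ∀ m : ℤ, ∀ c : ℤ → ℂ,
        α * lpNorm p (chiProj ((N₁ : ℤ) * m) N₁ c) ≤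
          lpNorm p (chiProj ((N₁ : ℤ) * m) (2 * N₁) (matMul a (chiProj ((N₁ : ℤ) * m) N₁ c))) := by
  obtain ⟨C₀, hC₀, N₀, hN₀, hbound⟩ := hyp
  have hconst : 2 * ((5 : ℝ≥0∞) + (2 : ℝ≥0∞) ^ (1 - p.toReal)) ^ (1 / p.toReal) ≠ ⊤ := by
    refine ENNReal.mul_ne_top (by norm_num) (ENNReal.rpow_ne_top_of_nonneg (by positivity) ?_)
    exact ENNReal.add_ne_top.2
      ⟨by norm_num, ENNReal.rpow_ne_top_of_ne_zero two_ne_zero ofNat_ne_top⟩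
  have hsmall := by
    simpa only [mul_zero] using ENNReal.Tendsto.const_mul
      (tendsto_iInf_add_div_mul (tendsto_normC_sub_trunc hA.ne) hA.ne) (Or.inr hconst)
  obtain ⟨N₁, hN₀N₁, hlt⟩ :=
    ((eventually_ge_atTop N₀).and (hsmall.eventually_lt_const (pos_iff_ne_zero.2 hC₀))).exists
  exact ⟨N₁, hN₀.trans_le hN₀N₁, C₀, hlt, hbound N₁ hN₀N₁⟩

theorem stmt12 (p : ℝ≥0∞) (hp : 1 ≤ p) (a : ℤ → ℤ → ℂ) (hA : normC a < ⊤)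
    (hyp : ∃ C₀ : ℝ≥0∞, C₀ ≠ 0 ∧ ∃ N₀ : ℕ, 0 < N₀ ∧ ∀ N : ℕ, N₀ ≤ N → ∀ m : ℤ, ∀ c : ℤ → ℂ,
      C₀ * lpNorm p (chiProj ((N : ℤ) * m) N c) ≤
        lpNorm p (chiProj ((N : ℤ) * m) (2 * N) (matMul a (chiProj ((N : ℤ) * m) N c)))) :
    ∃ N₁ : ℕ, 0 < N₁ ∧ ∃ α : ℝ≥0∞,
      2 * ((5 : ℝ≥0∞) + (2 : ℝ≥0∞) ^ (1 - p.toReal)) ^ (1 / p.toReal) *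
          (⨅ (s : ℕ) (_ : s ≤ N₁),
            (normC (fun i j => a i j - trunc a s i j) + ((s : ℝ≥0∞) / (N₁ : ℝ≥0∞)) * normC a)) < α ∧
      ∀ m : ℤ, ∀ c : ℤ → ℂ,
        α * lpNorm p (chiProj ((N₁ : ℤ) * m) N₁ c) ≤
          lpNorm p (chiProj ((N₁ : ℤ) * m) (2 * N₁) (matMul a (chiProj ((N₁ : ℤ) * m) N₁ c))) :=
  stmt12_general p a hA hyp
end

section
/- Let a = (a(j))_{j∈ℤ} be finitely supported with a(j)=0 for |j|>k, and suppose the Laurent (Toeplitz) matrix A=(a(j−j'))_{j,j'∈ℤ} does not have ℓ^p-stability (1 ≤ p < ∞). Then for every integer N > k, the finite section matrix Ã_N = (a(j−j'))_{−N−k ≤ j ≤ N+k, −N ≤ j' ≤ N} satisfies inf_{0≠c∈ℝ^{2N+1}} ‖Ã_N c‖_p / ‖c‖_p ≤ (2(5+2^{1−p})^{1/p} k / N) · Σ_{|j|≤k} |a(j)|. -/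
open MeasureTheory ENNReal Filter

/-
If the symbol `σ(z) = ∑ₗ a(l) zˡ` had no zero on the unit circle, `A` would be `ℓ^p`-stable:
up to a shift, `A` is the polynomial `zᵏ σ(z)` evaluated at the shift `S`, and it factors into
operators `S - r` with `|r| ≠ 1`, each bounded below by `|1 - |r||`. So `σ(r) = 0` for some
`|r| = 1`, and the windowed plane wave `c(j) = ψ₀(j/N) r⁻ʲ` is an almost-eigenvector: since
`σ(r) = 0`, `(Ac)(j) = r⁻ʲ ∑ₗ a(l) rˡ (ψ₀((j-l)/N) - ψ₀(j/N))`, which the 2-Lipschitz window `ψ₀`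
bounds by `(2k/N) ∑ |a(l)|` on the `2(N+k)+1 ≤ 5N` sites where `Ac` lives, while `|c| = 1` on at
least `N` sites.
-/
section SequenceNorm

variable {p : ℝ≥0∞}

lemma aestronglyMeasurable_count (f : ℤ → ℂ) :
    AEStronglyMeasurable f (Measure.count : Measure ℤ) :=
  (measurable_of_countable f).aestronglyMeasurable

lemma lpNorm_eq_tsum_rpow (hp0 : p ≠ 0) (hp : p ≠ ⊤) (f : ℤ → ℂ) :
    lpNorm p f = (∑' j, ‖f j‖ₑ ^ p.toReal) ^ (1 / p.toReal) := by
  rw [_root_.lpNorm, eLpNorm_eq_lintegral_rpow_enorm_toReal hp0 hp, lintegral_count]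

lemma lpNorm_comp_sub (f : ℤ → ℂ) (l : ℤ) : lpNorm p (fun j => f (j - l)) = lpNorm p f :=
  eLpNorm_comp_measurePreserving (aestronglyMeasurable_count f)
    (measurePreserving_sub_right Measure.count l)

lemma lpNorm_const_mul (r : ℂ) (f : ℤ → ℂ) : lpNorm p (fun j => r * f j) = ‖r‖ₑ * lpNorm p f :=
  eLpNorm_const_smul r f p Measure.count

lemma lpNorm_add_le (hp : 1 ≤ p) (f g : ℤ → ℂ) : lpNorm p (f + g) ≤ lpNorm p f + lpNorm p g :=
  eLpNorm_add_le (aestronglyMeasurable_count f) (aestronglyMeasurable_count g) hp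

lemma lpNorm_sub_le (hp : 1 ≤ p) (f g : ℤ → ℂ) : lpNorm p (f - g) ≤ lpNorm p f + lpNorm p g :=
  eLpNorm_sub_le (aestronglyMeasurable_count f) (aestronglyMeasurable_count g) hp

lemma lpNorm_sum_le (hp : 1 ≤ p) {ι : Type*} (s : Finset ι) (f : ι → ℤ → ℂ) :
    lpNorm p (∑ i ∈ s, f i) ≤ ∑ i ∈ s, lpNorm p (f i) :=
  eLpNorm_sum_le (fun i _ => aestronglyMeasurable_count (f i)) hp

lemma lpNorm_le_card_rpow_mul (hp0 : p ≠ 0) (hp : p ≠ ⊤) {f : ℤ → ℂ} {s : Finset ℤ}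
    (hs : ∀ j ∉ s, f j = 0) {D : ℝ≥0∞} (hD : ∀ j, ‖f j‖ₑ ≤ D) :
    lpNorm p f ≤ (s.card : ℝ≥0∞) ^ (1 / p.toReal) * D := by
  have ht : 0 < p.toReal := ENNReal.toReal_pos hp0 hp
  rw [lpNorm_eq_tsum_rpow hp0 hp, tsum_eq_sum (s := s) fun j hj => by simp [hs j hj, ht]]
  calc (∑ j ∈ s, ‖f j‖ₑ ^ p.toReal) ^ (1 / p.toReal)
      ≤ (s.card * D ^ p.toReal) ^ (1 / p.toReal) := by
        gcongr
        simpa using Finset.sum_le_sum fun j (_ : j ∈ s) => ENNReal.rpow_le_rpow (hD j) ht.le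
    _ = (s.card : ℝ≥0∞) ^ (1 / p.toReal) * D := by
        rw [ENNReal.mul_rpow_of_nonneg _ _ (by positivity), ← ENNReal.rpow_mul,
          mul_one_div_cancel ht.ne', ENNReal.rpow_one]

lemma card_rpow_le_lpNorm (hp0 : p ≠ 0) (hp : p ≠ ⊤) {f : ℤ → ℂ} {s : Finset ℤ}
    (hs : ∀ j ∈ s, ‖f j‖ₑ = 1) : (s.card : ℝ≥0∞) ^ (1 / p.toReal) ≤ lpNorm p f := by
  rw [lpNorm_eq_tsum_rpow hp0 hp]
  gcongr
  calc (s.card : ℝ≥0∞) = ∑ j ∈ s, ‖f j‖ₑ ^ p.toReal := by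
        rw [Finset.sum_congr rfl fun j hj => by rw [hs j hj, ENNReal.one_rpow]]; simp
    _ ≤ ∑' j, ‖f j‖ₑ ^ p.toReal := ENNReal.sum_le_tsum s

end SequenceNorm

lemma Finset.sum_Icc_neg_eq_sum_range {M : Type*} [AddCommMonoid M] (k : ℕ) (f : ℤ → M) :
    ∑ l ∈ Finset.Icc (-(k : ℤ)) k, f l = ∑ m ∈ Finset.range (2 * k + 1), f (m - k) := by
  refine Finset.sum_nbij' (fun l => (l + k).toNat) (fun m => m - k) ?_ ?_ ?_ ?_ ?_ <;>
    intro x hx <;> simp only [Finset.mem_Icc, Finset.mem_range] at hx ⊢ <;>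
    first | omega | (congr 1; omega)

section Laurent

variable {p : ℝ≥0∞} {a : ℤ → ℂ} {k : ℕ}

lemma matMul_laurent_eq_sum (ha : ∀ j : ℤ, (k : ℤ) < |j| → a j = 0) (c : ℤ → ℂ) (j : ℤ) :
    matMul (fun j j' : ℤ => a (j - j')) c j = ∑ l ∈ Finset.Icc (-(k : ℤ)) k, a l * c (j - l) := by
  rw [matMul, ← (Equiv.subLeft j).tsum_eq]
  simp only [Equiv.subLeft_apply, sub_sub_self]
  refine tsum_eq_sum (s := Finset.Icc (-(k : ℤ)) k) fun l hl => ?_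
  rw [ha l (by rw [Finset.mem_Icc] at hl; rw [lt_abs]; omega), zero_mul]

lemma lpNorm_laurent_le (hp : 1 ≤ p) (ha : ∀ j : ℤ, (k : ℤ) < |j| → a j = 0) (c : ℤ → ℂ) :
    lpNorm p (matMul (fun j j' : ℤ => a (j - j')) c) ≤
      (∑ l ∈ Finset.Icc (-(k : ℤ)) k, ‖a l‖ₑ) * lpNorm p c := by
  have hsum : matMul (fun j j' : ℤ => a (j - j')) c =
      ∑ l ∈ Finset.Icc (-(k : ℤ)) k, fun j => a l * c (j - l) := by
    ext j
    rw [matMul_laurent_eq_sum ha, Finset.sum_apply]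
  rw [hsum, Finset.sum_mul]
  refine (lpNorm_sum_le hp _ _).trans_eq (Finset.sum_congr rfl fun l _ => ?_)
  rw [lpNorm_const_mul, lpNorm_comp_sub]

lemma matMul_laurent_eq_zero_of_lt_abs (ha : ∀ j : ℤ, (k : ℤ) < |j| → a j = 0) {c : ℤ → ℂ}
    {N : ℕ} (hc : ∀ j : ℤ, (N : ℤ) < |j| → c j = 0) {j : ℤ} (hj : (N : ℤ) + k < |j|) :
    matMul (fun j j' : ℤ => a (j - j')) c j = 0 := by
  rw [matMul_laurent_eq_sum ha]
  refine Finset.sum_eq_zero fun l hl => ?_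
  rw [Finset.mem_Icc] at hl
  have : (N : ℤ) < |j - l| := by
    have := abs_sub_abs_le_abs_sub j l
    have := abs_le.mpr hl
    omega
  rw [hc _ this, mul_zero]

end Laurent

section BoundedBelow

open Polynomial

variable {p : ℝ≥0∞}

def LpBoundedBelow (p : ℝ≥0∞) (T : Module.End ℂ (ℤ → ℂ)) : Prop :=
  ∃ C ≠ 0, ∀ c : ℤ → ℂ, lpNorm p c < ⊤ → C * lpNorm p c ≤ lpNorm p (T c) ∧ lpNorm p (T c) < ⊤

lemma LpBoundedBelow.mul {S T : Module.End ℂ (ℤ → ℂ)} (hS : LpBoundedBelow p S)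
    (hT : LpBoundedBelow p T) : LpBoundedBelow p (S * T) := by
  obtain ⟨C, hC, hS⟩ := hS
  obtain ⟨D, hD, hT⟩ := hT
  refine ⟨C * D, mul_ne_zero hC hD, fun c hc => ?_⟩
  obtain ⟨hTc, hTc_lt⟩ := hT c hc
  obtain ⟨hSTc, hSTc_lt⟩ := hS (T c) hTc_lt
  refine ⟨?_, hSTc_lt⟩
  calc C * D * lpNorm p c = C * (D * lpNorm p c) := mul_assoc _ _ _
    _ ≤ C * lpNorm p (T c) := by gcongr
    _ ≤ lpNorm p ((S * T) c) := hSTc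

lemma lpBoundedBelow_one : LpBoundedBelow p 1 :=
  ⟨1, one_ne_zero, fun _ hc => ⟨(one_mul _).le, hc⟩⟩

lemma lpBoundedBelow_algebraMap {γ : ℂ} (hγ : γ ≠ 0) :
    LpBoundedBelow p (algebraMap ℂ (Module.End ℂ (ℤ → ℂ)) γ) := by
  refine ⟨‖γ‖ₑ, by simpa using hγ, fun c hc => ?_⟩
  have h : lpNorm p (algebraMap ℂ (Module.End ℂ (ℤ → ℂ)) γ c) = ‖γ‖ₑ * lpNorm p c :=
    lpNorm_const_mul γ c
  rw [h]
  exact ⟨le_rfl, ENNReal.mul_lt_top enorm_lt_top hc⟩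

def shiftEnd : Module.End ℂ (ℤ → ℂ) := LinearMap.funLeft ℂ ℂ (· - 1)

lemma shiftEnd_pow_apply (n : ℕ) (c : ℤ → ℂ) (j : ℤ) : (shiftEnd ^ n) c j = c (j - n) := by
  induction n generalizing c with
  | zero => simp
  | succ n ih =>
    rw [pow_succ, Module.End.mul_apply, ih]
    simp only [shiftEnd, LinearMap.funLeft_apply, Nat.cast_succ, sub_add_eq_sub_sub]

lemma lpBoundedBelow_shiftEnd_sub (hp : 1 ≤ p) {r : ℂ} (hr : ‖r‖ ≠ 1) :
    LpBoundedBelow p (shiftEnd - algebraMap ℂ _ r) := by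
  have hx : ‖r‖ₑ ≠ 1 := by rwa [Ne, ← ofReal_norm, ENNReal.ofReal_eq_one]
  set x : ℝ≥0∞ := ‖r‖ₑ
  set R := algebraMap ℂ (Module.End ℂ (ℤ → ℂ)) r
  -- `max (1 - x) (x - 1)` is `|1 - ‖r‖|`, written with truncated subtraction
  refine ⟨max (1 - x) (x - 1), ?_, fun c hc => ?_⟩
  · rw [Ne, max_eq_zero, tsub_eq_zero_iff_le, tsub_eq_zero_iff_le]
    exact fun h => hx (le_antisymm h.2 h.1)
  set d := (shiftEnd - R) c
  have hshift : lpNorm p (shiftEnd c) = lpNorm p c := lpNorm_comp_sub c 1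
  have hsmul : lpNorm p (R c) = x * lpNorm p c := lpNorm_const_mul r c
  have h₁ : lpNorm p c ≤ lpNorm p d + x * lpNorm p c := by
    rw [← hsmul, ← hshift, ← sub_add_cancel (shiftEnd c) (R c)]
    exact lpNorm_add_le hp _ _
  have h₂ : x * lpNorm p c ≤ lpNorm p d + lpNorm p c := by
    rw [← hsmul, ← hshift, ← sub_sub_self (shiftEnd c) (R c)]
    exact (lpNorm_sub_le hp _ _).trans_eq (add_comm _ _)
  refine ⟨?_, ?_⟩
  · rw [max_mul_of_nonneg _ _ zero_le, ENNReal.sub_mul fun _ _ => hc.ne,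
      ENNReal.sub_mul fun _ _ => hc.ne, one_mul]
    exact max_le (tsub_le_iff_right.mpr h₁) (tsub_le_iff_right.mpr h₂)
  · calc lpNorm p d ≤ lpNorm p (shiftEnd c) + lpNorm p (R c) := lpNorm_sub_le hp _ _
      _ < ⊤ := by
          rw [hshift, hsmul]
          exact ENNReal.add_lt_top.mpr ⟨hc, ENNReal.mul_lt_top enorm_lt_top hc⟩

lemma lpBoundedBelow_aeval_shiftEnd (hp : 1 ≤ p) {P : ℂ[X]} (hP : P ≠ 0)
    (hroots : ∀ r ∈ P.roots, ‖r‖ ≠ 1) : LpBoundedBelow p (aeval shiftEnd P) := by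
  rw [(IsAlgClosed.splits P).eq_prod_roots, map_mul, aeval_C]
  refine (lpBoundedBelow_algebraMap (leadingCoeff_ne_zero.mpr hP)).mul ?_
  refine Multiset.prod_induction (fun Q => LpBoundedBelow p (aeval shiftEnd Q)) _
    (fun Q R hQ hR => by rw [map_mul]; exact hQ.mul hR)
    (by rw [map_one]; exact lpBoundedBelow_one) ?_
  simp only [Multiset.mem_map]
  rintro _ ⟨r, hr, rfl⟩
  rw [map_sub, aeval_X, aeval_C]
  exact lpBoundedBelow_shiftEnd_sub hp (hroots r hr)

end BoundedBelow

section Symbol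

open Polynomial

variable {p : ℝ≥0∞} {a : ℤ → ℂ} {k : ℕ}

noncomputable def laurentSymbol (a : ℤ → ℂ) (k : ℕ) (z : ℂ) : ℂ :=
  ∑ l ∈ Finset.Icc (-(k : ℤ)) k, a l * z ^ l

noncomputable def symbolPoly (a : ℤ → ℂ) (k : ℕ) : ℂ[X] :=
  ∑ m ∈ Finset.range (2 * k + 1), monomial m (a (m - k))

lemma coeff_symbolPoly (ha : ∀ j : ℤ, (k : ℤ) < |j| → a j = 0) (n : ℕ) :
    (symbolPoly a k).coeff n = a (n - k) := by
  rw [symbolPoly, finsetSum_coeff]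
  simp only [coeff_monomial, Finset.sum_ite_eq', Finset.mem_range]
  split_ifs with hn
  · rfl
  · exact (ha _ (by rw [abs_of_nonneg (by omega)]; omega)).symm

lemma natDegree_symbolPoly_lt (ha : ∀ j : ℤ, (k : ℤ) < |j| → a j = 0) :
    (symbolPoly a k).natDegree < 2 * k + 1 := by
  refine Nat.lt_succ_of_le (natDegree_le_iff_coeff_eq_zero.mpr fun m hm => ?_)
  rw [coeff_symbolPoly ha]
  exact ha _ (by rw [abs_of_nonneg (by omega)]; omega)

lemma eval_symbolPoly {z : ℂ} (hz : z ≠ 0) :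
    (symbolPoly a k).eval z = z ^ k * laurentSymbol a k z := by
  rw [symbolPoly, eval_finsetSum, laurentSymbol, Finset.sum_Icc_neg_eq_sum_range, Finset.mul_sum]
  refine Finset.sum_congr rfl fun m _ => ?_
  rw [eval_monomial, zpow_sub₀ hz, zpow_natCast, zpow_natCast]
  field_simp

lemma matMul_laurent_eq_aeval_shiftEnd (ha : ∀ j : ℤ, (k : ℤ) < |j| → a j = 0) (c : ℤ → ℂ) :
    matMul (fun j j' : ℤ => a (j - j')) c = fun j => aeval shiftEnd (symbolPoly a k) c (j + k) := by
  ext j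
  rw [matMul_laurent_eq_sum ha, aeval_eq_sum_range' (natDegree_symbolPoly_lt ha),
    Finset.sum_Icc_neg_eq_sum_range, LinearMap.coe_sum, Finset.sum_apply, Finset.sum_apply]
  refine Finset.sum_congr rfl fun m _ => ?_
  rw [LinearMap.smul_apply, Pi.smul_apply, shiftEnd_pow_apply, coeff_symbolPoly ha, smul_eq_mul]
  ring_nf

theorem laurent_stable_of_laurentSymbol_ne_zero (hp : 1 ≤ p)
    (ha : ∀ j : ℤ, (k : ℤ) < |j| → a j = 0) (hσ : ∀ z : ℂ, ‖z‖ = 1 → laurentSymbol a k z ≠ 0) :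
    ∃ C₁ C₂ : ℝ≥0∞, C₁ ≠ 0 ∧ C₂ ≠ ⊤ ∧ ∀ c : ℤ → ℂ, lpNorm p c < ⊤ →
      C₁ * lpNorm p c ≤ lpNorm p (matMul (fun j j' : ℤ => a (j - j')) c) ∧
        lpNorm p (matMul (fun j j' : ℤ => a (j - j')) c) ≤ C₂ * lpNorm p c := by
  have hroots : ∀ z ∈ (symbolPoly a k).roots, ‖z‖ ≠ 1 := by
    intro z hz hz1
    have hz0 : z ≠ 0 := by rintro rfl; simp at hz1
    have := (isRoot_of_mem_roots hz).eq_zero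
    rw [eval_symbolPoly hz0] at this
    exact hσ z hz1 ((mul_eq_zero.mp this).resolve_left (pow_ne_zero _ hz0))
  have hP : symbolPoly a k ≠ 0 := by
    intro hP
    apply hσ 1 norm_one
    simpa [hP] using (eval_symbolPoly (a := a) (k := k) one_ne_zero).symm
  obtain ⟨C, hC, hbound⟩ := lpBoundedBelow_aeval_shiftEnd hp hP hroots
  refine ⟨C, _, hC, (ENNReal.sum_lt_top.mpr fun _ _ => enorm_lt_top).ne,
    fun c hc => ⟨?_, lpNorm_laurent_le hp ha c⟩⟩
  rw [matMul_laurent_eq_aeval_shiftEnd ha]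
  simp_rw [← sub_neg_eq_add _ (k : ℤ)]
  rw [lpNorm_comp_sub]
  exact (hbound c hc).1

end Symbol

section Window

lemma psi0_of_abs_le_half {x : ℝ} (h : |x| ≤ 1 / 2) : psi0 x = 1 := by
  rw [psi0, min_eq_right (by linarith), max_eq_left zero_le_one]

lemma psi0_of_one_le_abs {x : ℝ} (h : 1 ≤ |x|) : psi0 x = 0 :=
  max_eq_right (min_le_of_left_le (by linarith))

lemma lipschitzWith_psi0 : LipschitzWith 2 psi0 := by
  have h : LipschitzWith 2 fun x : ℝ => 2 - 2 * |x| := LipschitzWith.of_dist_le_mul fun x y => by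
    rw [Real.dist_eq, Real.dist_eq, show 2 - 2 * |x| - (2 - 2 * |y|) = 2 * (|y| - |x|) by ring,
      abs_mul, abs_two, abs_sub_comm x y, NNReal.coe_two]
    exact mul_le_mul_of_nonneg_left (abs_abs_sub_abs_le_abs_sub y x) zero_le_two
  exact (h.min_const 1).max_const 0

noncomputable def windowedWave (z : ℂ) (N : ℕ) (j : ℤ) : ℂ := psi0 (j / N) * z ^ (-j)

variable {p : ℝ≥0∞} {a : ℤ → ℂ} {k N : ℕ} {z : ℂ}

lemma norm_windowedWave (hz : ‖z‖ = 1) (j : ℤ) : ‖windowedWave z N j‖ = psi0 (j / N) := by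
  rw [windowedWave, norm_mul, norm_zpow, hz, one_zpow, mul_one, Complex.norm_real,
    Real.norm_of_nonneg (psi0_nonneg _)]

lemma windowedWave_zero : windowedWave z N 0 = 1 := by
  simp [windowedWave, psi0_of_abs_le_half]

lemma windowedWave_eq_zero (hN : 0 < N) {j : ℤ} (hj : (N : ℤ) < |j|) : windowedWave z N j = 0 := by
  rw [windowedWave, psi0_of_one_le_abs, Complex.ofReal_zero, zero_mul]
  rw [abs_div, Nat.abs_cast, one_le_div (by positivity), ← Int.cast_abs]
  exact_mod_cast hj.le

lemma lpNorm_windowedWave_lt_top (hp0 : p ≠ 0) (hp : p ≠ ⊤) (hz : ‖z‖ = 1) (hN : 0 < N) :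
    lpNorm p (windowedWave z N) < ⊤ := by
  refine (lpNorm_le_card_rpow_mul hp0 hp (s := Finset.Icc (-(N : ℤ)) N) (D := 1)
    (fun j hj => windowedWave_eq_zero hN ?_) fun j => ?_).trans_lt ?_
  · rw [Finset.mem_Icc] at hj
    rw [lt_abs]
    omega
  · rw [← ofReal_norm, norm_windowedWave hz, ENNReal.ofReal_le_one]
    exact psi0_le_one _
  · exact ENNReal.mul_lt_top (ENNReal.rpow_lt_top_of_nonneg (by positivity) (by simp)) one_lt_top

lemma natCast_rpow_le_lpNorm_windowedWave (hp0 : p ≠ 0) (hp : p ≠ ⊤) (hz : ‖z‖ = 1)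
    (hN : 0 < N) : (N : ℝ≥0∞) ^ (1 / p.toReal) ≤ lpNorm p (windowedWave z N) := by
  set s := Finset.Icc (-((N / 2 : ℕ) : ℤ)) (N / 2 : ℕ)
  have hcard : N ≤ s.card := by
    rw [Int.card_Icc]
    omega
  refine le_trans ?_ (card_rpow_le_lpNorm hp0 hp (s := s) fun j hj => ?_)
  · gcongr
  · rw [← ofReal_norm, norm_windowedWave hz, psi0_of_abs_le_half, ENNReal.ofReal_one]
    rw [Finset.mem_Icc] at hj
    have hj' : 2 * |(j : ℝ)| ≤ N := by
      rw [← Int.cast_abs]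
      have := abs_le.mpr hj
      exact_mod_cast (by omega : 2 * |j| ≤ N)
    rw [abs_div, Nat.abs_cast, div_le_iff₀ (by positivity)]
    linarith

lemma matMul_laurent_windowedWave (ha : ∀ j : ℤ, (k : ℤ) < |j| → a j = 0) (hz : z ≠ 0)
    (hσ : laurentSymbol a k z = 0) (j : ℤ) :
    matMul (fun j j' : ℤ => a (j - j')) (windowedWave z N) j = z ^ (-j) *
      ∑ l ∈ Finset.Icc (-(k : ℤ)) k,
        a l * z ^ l * (psi0 ((j - l : ℤ) / N) - psi0 (j / N) : ℝ) := by
  calc matMul (fun j j' : ℤ => a (j - j')) (windowedWave z N) j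
      = z ^ (-j) * ∑ l ∈ Finset.Icc (-(k : ℤ)) k, a l * z ^ l * psi0 ((j - l : ℤ) / N) := by
        rw [matMul_laurent_eq_sum ha, Finset.mul_sum]
        refine Finset.sum_congr rfl fun l _ => ?_
        rw [windowedWave, neg_sub, zpow_sub₀ hz, zpow_neg]
        ring
    _ = z ^ (-j) * (∑ l ∈ Finset.Icc (-(k : ℤ)) k, a l * z ^ l * psi0 ((j - l : ℤ) / N) -
          laurentSymbol a k z * psi0 (j / N)) := by rw [hσ, zero_mul, sub_zero]
    _ = _ := by
        rw [laurentSymbol, Finset.sum_mul, ← Finset.sum_sub_distrib]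
        push_cast
        simp only [mul_sub]

lemma norm_matMul_laurent_windowedWave_le (ha : ∀ j : ℤ, (k : ℤ) < |j| → a j = 0)
    (hz : ‖z‖ = 1) (hσ : laurentSymbol a k z = 0) (hN : 0 < N) (j : ℤ) :
    ‖matMul (fun j j' : ℤ => a (j - j')) (windowedWave z N) j‖ ≤
      2 * k / N * ∑ l ∈ Finset.Icc (-(k : ℤ)) k, ‖a l‖ := by
  have hz0 : z ≠ 0 := by rintro rfl; simp at hz
  rw [matMul_laurent_windowedWave ha hz0 hσ, norm_mul, norm_zpow, hz, one_zpow, one_mul,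
    Finset.mul_sum]
  refine (norm_sum_le _ _).trans (Finset.sum_le_sum fun l hl => ?_)
  rw [norm_mul, norm_mul, norm_zpow, hz, one_zpow, mul_one, Complex.norm_real, mul_comm]
  gcongr
  calc ‖psi0 ((j - l : ℤ) / N) - psi0 (j / N)‖
      ≤ 2 * ‖((j - l : ℤ) : ℝ) / N - j / N‖ := by
        simpa [dist_eq_norm] using lipschitzWith_psi0.dist_le_mul ((j - l : ℤ) / N) (j / N)
    _ = 2 * |(l : ℝ)| / N := by
        rw [Real.norm_eq_abs, ← sub_div, abs_div, Nat.abs_cast]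
        push_cast
        rw [sub_sub_cancel_left, abs_neg, mul_div_assoc]
    _ ≤ 2 * k / N := by
        gcongr
        rw [← Int.cast_abs]
        exact_mod_cast abs_le.mpr (Finset.mem_Icc.mp hl)

lemma lpNorm_matMul_laurent_windowedWave_le (hp0 : p ≠ 0) (hp : p ≠ ⊤)
    (ha : ∀ j : ℤ, (k : ℤ) < |j| → a j = 0) (hz : ‖z‖ = 1) (hσ : laurentSymbol a k z = 0)
    (hkN : k < N) :
    lpNorm p (matMul (fun j j' : ℤ => a (j - j')) (windowedWave z N)) ≤
      2 * 5 ^ (1 / p.toReal) * k / N * (∑ l ∈ Finset.Icc (-(k : ℤ)) k, ‖a l‖ₑ) *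
        (N : ℝ≥0∞) ^ (1 / p.toReal) := by
  have hN : 0 < N := by omega
  set s := Finset.Icc (-((N + k : ℕ) : ℤ)) (N + k : ℕ)
  have hsupp : ∀ j ∉ s, matMul (fun j j' : ℤ => a (j - j')) (windowedWave z N) j = 0 := by
    intro j hj
    refine matMul_laurent_eq_zero_of_lt_abs ha (fun j => windowedWave_eq_zero hN) ?_
    rw [Finset.mem_Icc] at hj
    rw [lt_abs]
    omega
  have hbound : ∀ j, ‖matMul (fun j j' : ℤ => a (j - j')) (windowedWave z N) j‖ₑ ≤
      2 * k / N * ∑ l ∈ Finset.Icc (-(k : ℤ)) k, ‖a l‖ₑ := by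
    intro j
    rw [← ofReal_norm]
    refine (ENNReal.ofReal_le_ofReal
      (norm_matMul_laurent_windowedWave_le ha hz hσ hN j)).trans_eq ?_
    rw [ENNReal.ofReal_mul (by positivity), ENNReal.ofReal_div_of_pos (by positivity),
      ENNReal.ofReal_sum_of_nonneg fun _ _ => norm_nonneg _]
    simp [ofReal_norm]
  calc _ ≤ (s.card : ℝ≥0∞) ^ (1 / p.toReal) * (2 * k / N * ∑ l ∈ Finset.Icc (-(k : ℤ)) k, ‖a l‖ₑ) :=
        lpNorm_le_card_rpow_mul hp0 hp hsupp hbound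
    _ ≤ (5 * N : ℝ≥0∞) ^ (1 / p.toReal) *
          (2 * k / N * ∑ l ∈ Finset.Icc (-(k : ℤ)) k, ‖a l‖ₑ) := by
        gcongr
        rw [Int.card_Icc]
        exact_mod_cast (by omega : ((N + k : ℕ) + 1 - -((N + k : ℕ) : ℤ)).toNat ≤ 5 * N)
    _ = _ := by
        rw [ENNReal.mul_rpow_of_nonneg _ _ (by positivity)]
        simp only [div_eq_mul_inv]
        ring

end Window

theorem stmt15 (p : ℝ≥0∞) (hp : 1 ≤ p) (hp' : p ≠ ⊤) (a : ℤ → ℂ) (k : ℕ)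
    (ha : ∀ j : ℤ, (k : ℤ) < |j| → a j = 0)
    (hns : ¬ (∃ C₁ C₂ : ℝ≥0∞, C₁ ≠ 0 ∧ C₂ ≠ ⊤ ∧ ∀ c : ℤ → ℂ, lpNorm p c < ⊤ →
      C₁ * lpNorm p c ≤ lpNorm p (matMul (fun j j' : ℤ => a (j - j')) c) ∧
        lpNorm p (matMul (fun j j' : ℤ => a (j - j')) c) ≤ C₂ * lpNorm p c)) :
    ∀ N : ℕ, k < N →
      (⨅ (c : ℤ → ℂ) (_ : c ≠ 0) (_ : ∀ j : ℤ, (N : ℤ) < |j| → c j = 0),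
          lpNorm p (matMul (fun j j' : ℤ => a (j - j')) c) / lpNorm p c) ≤
        (2 * ((5 : ℝ≥0∞) + (2 : ℝ≥0∞) ^ (1 - p.toReal)) ^ (1 / p.toReal) * (k : ℝ≥0∞) / (N : ℝ≥0∞)) *
          ∑ j ∈ Finset.Icc (-(k : ℤ)) (k : ℤ), (‖a j‖₊ : ℝ≥0∞) := by
  intro N hkN
  have hN : 0 < N := by omega
  have hp0 : p ≠ 0 := (zero_lt_one.trans_le hp).ne'
  obtain ⟨z, hz, hσ⟩ : ∃ z : ℂ, ‖z‖ = 1 ∧ laurentSymbol a k z = 0 := by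
    by_contra! h
    exact hns (laurent_stable_of_laurentSymbol_ne_zero hp ha h)
  have hc0 : windowedWave z N ≠ 0 := fun h => by
    simpa [h] using windowedWave_zero (z := z) (N := N)
  have hlow := natCast_rpow_le_lpNorm_windowedWave hp0 hp' hz hN
  refine (iInf₂_le_of_le (windowedWave z N) hc0
    (iInf_le _ fun j => windowedWave_eq_zero hN)).trans ?_
  rw [ENNReal.div_le_iff ((ENNReal.rpow_pos (by exact_mod_cast hN) (by simp)).trans_le hlow).ne'
    (lpNorm_windowedWave_lt_top hp0 hp' hz hN).ne]
  calc lpNorm p (matMul (fun j j' : ℤ => a (j - j')) (windowedWave z N))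
      ≤ 2 * 5 ^ (1 / p.toReal) * k / N * (∑ l ∈ Finset.Icc (-(k : ℤ)) k, ‖a l‖ₑ) *
          (N : ℝ≥0∞) ^ (1 / p.toReal) :=
        lpNorm_matMul_laurent_windowedWave_le hp0 hp' ha hz hσ hkN
    _ ≤ _ := by
        simp only [enorm_eq_nnnorm]
        gcongr
        exact le_self_add
end

section
/- Let a(0)=1, a(−1)=−1, a(j)=0 otherwise, and for an integer N ≥ 1 let Ã_N be the (2N+2)×(2N+1) lower bidiagonal matrix (a(j−j'))_{−N−1 ≤ j ≤ N+1, −N ≤ j' ≤ N} (i.e., with −1 on the main diagonal shifted appropriately and 1 on the subdiagonal). Then for all 1 ≤ p ≤ ∞ and all c ∈ ℝ^{2N+1}, ‖Ã_N c‖_p ≥ (N+1)^{−1} ‖c‖_p. -/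
/-!
Write `d j = c j - c (j + 1)`. Since `c` vanishes outside `[-N, N]`, telescoping gives
`c j = ∑_{m ≤ N} d (j + m)` for `j ≥ 0` and `c j = -∑_{m ≤ N} d (j - m - 1)` for `j < 0`.
For fixed `m` the `m`-th summand is, up to sign, `d` composed with the injection `foldShift m`,
so its `ℓᵖ` norm is at most `‖d‖_p`, and Minkowski's inequality over the `N + 1` summands gives
`‖c‖_p ≤ (N + 1) ‖d‖_p`.
-/

open MeasureTheory ENNReal Filter

open Finset Function

section CountingMeasure

variable {α β E F : Type*} [MeasurableSpace α] [DiscreteMeasurableSpace α]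
  [MeasurableSpace β] [DiscreteMeasurableSpace β] [Countable β]
  [NormedAddCommGroup E] [NormedAddCommGroup F]

lemma eLpNorm_count_le_of_norm_le_comp {f : α → E} {g : β → F} {σ : α → β}
    (hσ : Injective σ) (hfg : ∀ x, ‖f x‖ ≤ ‖g (σ x)‖) (p : ℝ≥0∞) :
    eLpNorm f p Measure.count ≤ eLpNorm g p Measure.count :=
  calc eLpNorm f p Measure.count ≤ eLpNorm (g ∘ σ) p Measure.count := eLpNorm_mono hfg
    _ = eLpNorm g p (Measure.count.map σ) :=
      (eLpNorm_map_measure .of_discrete Measurable.of_discrete.aemeasurable).symm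
    _ ≤ eLpNorm g p Measure.count :=
      eLpNorm_mono_measure g (hσ.map_count_le Measurable.of_discrete)

lemma eLpNorm_count_sum_le_card_mul [Countable α] {ι : Type*} (s : Finset ι)
    {f : ι → α → E} {g : β → F} {σ : ι → α → β} (hσ : ∀ i, Injective (σ i))
    (hfg : ∀ i x, ‖f i x‖ ≤ ‖g (σ i x)‖)
    {p : ℝ≥0∞} (hp : 1 ≤ p) :
    eLpNorm (∑ i ∈ s, f i) p Measure.count ≤ #s * eLpNorm g p Measure.count :=
  calc eLpNorm (∑ i ∈ s, f i) p Measure.count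
      ≤ ∑ i ∈ s, eLpNorm (f i) p Measure.count := eLpNorm_sum_le (fun _ _ ↦ .of_discrete) hp
    _ ≤ ∑ _i ∈ s, eLpNorm g p Measure.count :=
      sum_le_sum fun i _ ↦ eLpNorm_count_le_of_norm_le_comp (hσ i) (hfg i) p
    _ = #s * eLpNorm g p Measure.count := by rw [sum_const, nsmul_eq_mul]

end CountingMeasure

lemma matMul_firstDifference (c : ℤ → ℂ) :
    matMul (fun j j' ↦ if j - j' = 0 then (1 : ℂ) else if j - j' = -1 then -1 else 0) c
      = fun j ↦ c j - c (j + 1) := by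
  funext j
  rw [matMul, tsum_eq_sum (s := {j, j + 1}) fun j' hj' ↦ ?_, sum_pair (by omega)]
  · simp [sub_eq_add_neg]
  · simp only [mem_insert, mem_singleton, not_or] at hj'
    rw [if_neg (by omega), if_neg (by omega), zero_mul]

def foldShift (m : ℕ) (j : ℤ) : ℤ := if 0 ≤ j then j + m else j - m - 1

lemma foldShift_injective (m : ℕ) : Injective (foldShift m) := by
  intro j₁ j₂ h
  simp only [foldShift] at h
  split_ifs at h <;> omega

lemma eq_sum_range_telescope {G : Type*} [AddCommGroup G] (c : ℤ → G) (N : ℕ)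
    (hc : ∀ j : ℤ, (N : ℤ) < |j| → c j = 0) :
    c = ∑ m ∈ range (N + 1), fun j ↦
      if 0 ≤ j then c (j + m) - c (j + m + 1) else c (j - m) - c (j - m - 1) := by
  funext j
  rw [Finset.sum_apply]
  split_ifs with hj
  · have := sum_range_sub' (fun m : ℕ ↦ c (j + m)) (N + 1)
    push_cast at this
    have hout : c (j + (N + 1)) = 0 := hc _ (by rw [abs_of_nonneg (by omega)]; omega)
    simp only [add_assoc, this, add_zero, hout, sub_zero]
  · have := sum_range_sub' (fun m : ℕ ↦ c (j - m)) (N + 1)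
    push_cast at this
    have hout : c (j - (N + 1)) = 0 := hc _ (by rw [abs_of_neg (by omega)]; omega)
    simp only [sub_sub, this, sub_zero, hout]

theorem stmt16_general (p : ℝ≥0∞) (hp : 1 ≤ p) (N : ℕ)
    (a : ℤ → ℂ) (ha : a = fun j : ℤ => if j = 0 then (1 : ℂ) else if j = -1 then -1 else 0)
    (c : ℤ → ℂ) (hc : ∀ j : ℤ, (N : ℤ) < |j| → c j = 0) :
    ((N : ℝ≥0∞) + 1)⁻¹ * lpNorm p c ≤ lpNorm p (matMul (fun j j' : ℤ => a (j - j')) c) := by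
  subst ha
  beta_reduce
  rw [_root_.lpNorm, _root_.lpNorm, matMul_firstDifference,
    ENNReal.inv_mul_le_iff (by simp) (by simp)]
  conv_lhs => rw [eq_sum_range_telescope c N hc]
  convert eLpNorm_count_sum_le_card_mul (range (N + 1)) (σ := foldShift) foldShift_injective
    (fun m j ↦ ?_) hp
  · simp
  · unfold foldShift
    split_ifs
    · exact le_rfl
    · rw [norm_sub_rev, sub_add_cancel]

theorem stmt16 (p : ℝ≥0∞) (hp : 1 ≤ p) (N : ℕ) (hN : 1 ≤ N)
    (a : ℤ → ℂ) (ha : a = fun j : ℤ => if j = 0 then (1 : ℂ) else if j = -1 then -1 else 0)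
    (c : ℤ → ℂ) (hc : ∀ j : ℤ, (N : ℤ) < |j| → c j = 0) :
    ((N : ℝ≥0∞) + 1)⁻¹ * lpNorm p c ≤ lpNorm p (matMul (fun j j' : ℤ => a (j - j')) c) :=
  stmt16_general p hp N a ha c hc
end
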